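/- Variational formula for effective conductances (Hadamard-type): in a metric graph with boundary points $z_1(r_1),\dots,z_n(r_n)$ at distances $r_i$ along the $n$ edges adjacent to the boundary $A$, the effective conductances $C^{\mathrm{eff}}_{ij}(r_1,\dots,r_n)$ of the remaining network satisfy, for $j \ne i$: $\partial_{r_i} C^{\mathrm{eff}}_{ij} = C^{\mathrm{eff}}_{ij}\sum_{j'\ne i} C^{\mathrm{eff}}_{ij'}$, and for distinct $i,j,j'$ with $i\notin\{j,j'\}$: $\partial_{r_i} C^{\mathrm{eff}}_{jj'} = -C^{\mathrm{eff}}_{ij} C^{\mathrm{eff}}_{ij'}$. -/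

import Mathlib

open MeasureTheory ProbabilityTheory Filter

noncomputable section

/-! ### One-dimensional Brownian motion, bridges and local time -/

/-- Occupation-density local time at level `0` of `f` on `[a, b]` (defined as the limit of the
normalised occupation times of `[-ε, ε]`, junk value if the limit does not exist). -/
def localTimeOn (f : ℝ → ℝ) (a b : ℝ) : ℝ :=
  limUnder (nhdsWithin (0 : ℝ) (Set.Ioi 0)) fun ε =>
    (1 / (2 * ε)) * ∫ s in a..b, (if |f s| ≤ ε then (1 : ℝ) else 0)

/-- `l` is the local time at level `0` accumulated by the path `f` on `[0, T]`:
`l = lim_{ε → 0+} (2ε)⁻¹ ∫_0^T 1_{|f s| ≤ ε} ds`. -/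
def HasLocalTimeAtZero (f : ℝ → ℝ) (T l : ℝ) : Prop :=
  Tendsto (fun ε => (1 / (2 * ε)) * ∫ s in (0 : ℝ)..T, (if |f s| ≤ ε then (1 : ℝ) else 0))
    (nhdsWithin (0 : ℝ) (Set.Ioi 0)) (nhds l)

/-- `W` is a standard Brownian motion started from `w0` under `P`: continuous paths, Gaussian
increments of variance `t - s`, and independent increments. -/
structure IsBrownianMotion {Ω : Type} [MeasurableSpace Ω] (P : Measure Ω)
    (W : ℝ → Ω → ℝ) (w0 : ℝ) : Prop where
  meas : ∀ t, Measurable (W t)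
  start : ∀ᵐ ω ∂P, W 0 ω = w0
  cont : ∀ᵐ ω ∂P, Continuous fun t => W t ω
  gauss_incr : ∀ s t : ℝ, 0 ≤ s → s ≤ t →
    P.map (fun ω => W t ω - W s ω) = gaussianReal 0 (t - s).toNNReal
  indep_incr : ∀ n : ℕ, ∀ t : Fin (n + 1) → ℝ, (∀ i, 0 ≤ t i) → Monotone t →
    iIndepFun
      (fun i : Fin n => fun ω => W (t i.succ) ω - W (t i.castSucc) ω) P

/-- `X` is a Brownian bridge of time-length `T` from `w0` to `wT` under `P`
(standard Brownian motion conditioned on its endpoint values, realised through the usual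
pathwise construction from a standard Brownian motion). -/
def IsBrownianBridge {Ω : Type} [MeasurableSpace Ω] (P : Measure Ω)
    (X : ℝ → Ω → ℝ) (T w0 wT : ℝ) : Prop :=
  ∃ B : ℝ → Ω → ℝ, IsBrownianMotion P B 0 ∧
    ∀ ω t, X t ω = w0 + t / T * (wT - w0) + (B t ω - t / T * B T ω)

/-! ### Electrical networks -/

/-- A finite weighted graph (electrical network): symmetric nonnegative conductances with zero
diagonal; `0 < C u v` means that `u` and `v` are joined by an edge of conductance `C u v`. -/
structure WGraph where
  V : Type
  fin : Fintype V
  deq : DecidableEq V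
  C : V → V → ℝ
  symm : ∀ u v, C u v = C v u
  nonneg : ∀ u v, 0 ≤ C u v
  loopless : ∀ v, C v v = 0

attribute [instance] WGraph.fin WGraph.deq

namespace WGraph

variable (G : WGraph)

def Adj (u v : G.V) : Prop := 0 < G.C u v

instance (u v : G.V) : Decidable (G.Adj u v) := by unfold WGraph.Adj; infer_instance

/-- The resistance (= metric-graph length) of the edge from `u` to `v`. -/
def R (u v : G.V) : ℝ := 1 / G.C u v

/-- A walk in the graph from `u` to `v`, encoded as the list of visited vertices. -/
def IsWalk (u v : G.V) (l : List G.V) : Prop :=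
  l.Chain' G.Adj ∧ l.head? = some u ∧ l.getLast? = some v

def Connected : Prop := ∀ u v : G.V, ∃ l : List G.V, G.IsWalk u v l

/-- Interior vertices with respect to a boundary set `A`. -/
def inter (A : Finset G.V) : Type := {x : G.V // x ∉ A}

instance (A : Finset G.V) : Fintype (G.inter A) := by unfold inter; infer_instance
instance (A : Finset G.V) : DecidableEq (G.inter A) := by unfold inter; infer_instance

/-- The Laplacian matrix restricted to the interior vertices. -/
def lapMat (A : Finset G.V) : Matrix (G.inter A) (G.inter A) ℝ := fun x y =>
  if x = y then ∑ z : G.V, G.C x.1 z else -G.C x.1 y.1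

/-- The Green function of the network with Dirichlet boundary condition on `A`. -/
def green (A : Finset G.V) : Matrix (G.inter A) (G.inter A) ℝ := (G.lapMat A)⁻¹

/-- The harmonic extension to `V` of the function `h` given on the boundary `A`. -/
def harm (A : Finset G.V) (h : G.V → ℝ) (x : G.V) : ℝ :=
  if hx : x ∈ A then h x
  else ∑ y : G.inter A, G.green A ⟨x, hx⟩ y * ∑ a ∈ A, G.C y.1 a * h a

/-- The effective conductance matrix of the boundary set `A`: the conductances of the electrically
equivalent network on the vertex set `A` (Schur complement of the Laplacian). -/
def Ceff (A : Finset G.V) (x y : G.V) : ℝ :=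
  G.C x y + ∑ z : G.inter A, ∑ w : G.inter A, G.C x z.1 * G.green A z w * G.C w.1 y

/-- The two-point effective resistance between `x` and `y`. -/
def Reff2 (x y : G.V) : ℝ := 1 / G.Ceff {x, y} x y

/-- The effective conductance between two boundary pieces `S, T ⊆ A`. -/
def CeffSets (A S T : Finset G.V) : ℝ := ∑ x ∈ S, ∑ y ∈ T, G.Ceff A x y

/-- The effective resistance between a vertex `x` and a set `A` of vertices. -/
def ReffVertexSet (x : G.V) (A : Finset G.V) : ℝ :=
  1 / ∑ y ∈ A, G.Ceff (insert x A) x y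

/-- Points of the metric graph `𝒢̃`: a point is described by an oriented edge `(u, v)` together
with a coordinate `s ∈ [0, R(u,v)]` (so each point has two redundant descriptions). -/
def MGPoint : Type :=
  {p : G.V × G.V × ℝ // G.Adj p.1 p.2.1 ∧ p.2.2 ∈ Set.Icc 0 (G.R p.1 p.2.1)}

end WGraph

/-! ### The Gaussian free field on a metric graph -/

/-- The Gaussian free field on the metric graph of `G`, with boundary condition `h` on the
boundary set `A`, defined on the probability space `(Ω, P)`.  `φ u v s` is the value of the field
at the point of the edge from `u` to `v` at distance `s` from `u`.  The restriction of the field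
to the vertices is the discrete GFF (a Gaussian vector with mean the harmonic extension of `h`
and covariance the Green function), and given the vertex values the field on the edges is given
by independent Brownian bridges. -/
structure MGGFF (G : WGraph) (A : Finset G.V) (h : G.V → ℝ)
    {Ω : Type} [MeasurableSpace Ω] (P : Measure Ω) where
  φ : G.V → G.V → ℝ → Ω → ℝ
  vertexVal : G.V → Ω → ℝ
  meas_φ : ∀ u v s, Measurable (φ u v s)
  meas_vertexVal : ∀ x, Measurable (vertexVal x)
  φ_start : ∀ u v, G.Adj u v → ∀ ω, φ u v 0 ω = vertexVal u ω
  φ_symm : ∀ u v, G.Adj u v → ∀ s ω, φ u v s ω = φ v u (G.R u v - s) ω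
  boundary : ∀ x ∈ A, ∀ ω, vertexVal x ω = h x
  cont : ∀ u v, G.Adj u v → ∀ ω, Continuous fun s => φ u v s ω
  gaussian : ∀ lam : G.inter A → ℝ,
    P.map (fun ω => ∑ x : G.inter A, lam x * vertexVal x.1 ω) =
      gaussianReal (∑ x : G.inter A, lam x * G.harm A h x.1)
        (∑ x : G.inter A, ∑ y : G.inter A, lam x * G.green A x y * lam y).toNNReal
  bridges : ∃ ord : G.V → ℕ, Function.Injective ord ∧
    ∃ b : G.V → G.V → ℝ → Ω → ℝ,
      (∀ u v, G.Adj u v → IsBrownianBridge P (b u v) (G.R u v) 0 0) ∧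
      (∀ u v, G.Adj u v → ∀ s ω,
        φ u v s ω = vertexVal u ω + s / G.R u v * (vertexVal v ω - vertexVal u ω) + b u v s ω) ∧
      iIndepFun
        (fun e : {p : G.V × G.V // G.Adj p.1 p.2 ∧ ord p.1 < ord p.2} =>
          fun ω => fun s : ℝ => b e.1.1 e.1.2 s ω) P ∧
      IndepFun (fun ω => fun x : G.V => vertexVal x ω)
        (fun ω => fun e : {p : G.V × G.V // G.Adj p.1 p.2 ∧ ord p.1 < ord p.2} =>
          fun s : ℝ => b e.1.1 e.1.2 s ω) P

namespace MGGFF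

variable {G : WGraph} {A : Finset G.V} {h : G.V → ℝ} {Ω : Type} [MeasurableSpace Ω]
  {P : Measure Ω} (Γ : MGGFF G A h P)

/-- Local time at level `0` accumulated by the field on the portion `[s₁, s₂]` of the edge
from `u` to `v`. -/
def segLT (u v : G.V) (s₁ s₂ : ℝ) (ω : Ω) : ℝ := localTimeOn (fun r => Γ.φ u v r ω) s₁ s₂

/-- Local time at level `0` accumulated by the field along the whole edge from `u` to `v`. -/
def edgeLT (u v : G.V) (ω : Ω) : ℝ := Γ.segLT u v 0 (G.R u v) ω

/-- Local time at level `0` accumulated along a walk. -/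
def walkLT (l : List G.V) (ω : Ω) : ℝ :=
  ((l.zip l.tail).map fun p => Γ.edgeLT p.1 p.2 ω).sum

/-- The local-time pseudo-distance `δ_{u,v}` between two vertices: the infimum over continuous
paths from `u` to `v` of the local time at `0` accumulated by the field along the path
(the infimum is realised over walks in the graph). -/
def δ (u v : G.V) (ω : Ω) : ℝ :=
  sInf {d | ∃ l : List G.V, G.IsWalk u v l ∧ d = Γ.walkLT l ω}

/-- The pseudo-distance between two sets of vertices. -/
def δSet (S T : Finset G.V) (ω : Ω) : ℝ :=
  sInf {d | ∃ u ∈ S, ∃ v ∈ T, d = Γ.δ u v ω}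

/-- The value of the field at a point of the metric graph. -/
def atPoint (x : G.MGPoint) (ω : Ω) : ℝ := Γ.φ x.1.1 x.1.2.1 x.1.2.2 ω

/-- The pseudo-distance from a vertex `u` to the boundary `A`. -/
def δvA (ω : Ω) (u : G.V) : ℝ :=
  sInf {d | ∃ a ∈ A, ∃ l, G.IsWalk u a l ∧ d = Γ.walkLT l ω}

/-- The pseudo-distance `δ_{x,A}` from a point `x` of the metric graph to the boundary `A`. -/
def δPA (x : G.MGPoint) (ω : Ω) : ℝ :=
  min (Γ.segLT x.1.1 x.1.2.1 0 x.1.2.2 ω + Γ.δvA ω x.1.1)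
    (Γ.segLT x.1.1 x.1.2.1 x.1.2.2 (G.R x.1.1 x.1.2.1) ω + Γ.δvA ω x.1.2.1)

/-- The minimum of the field on the portion `[s₁, s₂]` of the edge from `u` to `v`. -/
def segMin (u v : G.V) (s₁ s₂ : ℝ) (ω : Ω) : ℝ :=
  sInf ((fun s => Γ.φ u v s ω) '' Set.Icc s₁ s₂)

/-- The minimum of the field along the whole edge from `u` to `v`. -/
def edgeMin (u v : G.V) (ω : Ω) : ℝ := Γ.segMin u v 0 (G.R u v) ω

/-- The minimum of the field along a walk. -/
def walkMin (l : List G.V) (ω : Ω) : ℝ :=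
  sInf ({m | ∃ x ∈ l, m = Γ.vertexVal x ω} ∪
    {m | ∃ p ∈ l.zip l.tail, m = Γ.edgeMin p.1 p.2 ω})

/-- `Ĩ_{u,A}`: the supremum over continuous paths joining the vertex `u` to `A` of the minimum
of the field along the path. -/
def supMinvA (ω : Ω) (u : G.V) : ℝ :=
  sSup {m | ∃ a ∈ A, ∃ l, G.IsWalk u a l ∧ m = Γ.walkMin l ω}

/-- `Ĩ_{x,A}` for a point `x` of the metric graph. -/
def supMinPA (x : G.MGPoint) (ω : Ω) : ℝ :=
  max (min (Γ.segMin x.1.1 x.1.2.1 0 x.1.2.2 ω) (Γ.supMinvA ω x.1.1))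
    (min (Γ.segMin x.1.1 x.1.2.1 x.1.2.2 (G.R x.1.1 x.1.2.1) ω) (Γ.supMinvA ω x.1.2.1))

/-- `I_{x,A} = min(0, Ĩ_{x,A})`. -/
def IPA (x : G.MGPoint) (ω : Ω) : ℝ := min 0 (Γ.supMinPA x ω)

/-- A walk along whose edges the field stays `≥ a`. -/
def WalkAbove (a : ℝ) (ω : Ω) (l : List G.V) : Prop :=
  ∀ p ∈ l.zip l.tail, ∀ s ∈ Set.Icc 0 (G.R p.1 p.2), a ≤ Γ.φ p.1 p.2 s ω

/-- Membership of the metric-graph point `x` in the first passage set `Λ̃_a` of level `a`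
started from the set of vertices `S`: there is a continuous path from `S` to `x` along which the
field stays `≥ a`. -/
def InFPS (a : ℝ) (S : Finset G.V) (x : G.MGPoint) (ω : Ω) : Prop :=
  (∃ u ∈ S, ∃ l, G.IsWalk u x.1.1 l ∧ Γ.WalkAbove a ω l ∧
    ∀ s ∈ Set.Icc 0 x.1.2.2, a ≤ Γ.φ x.1.1 x.1.2.1 s ω) ∨
  (∃ u ∈ S, ∃ l, G.IsWalk u x.1.2.1 l ∧ Γ.WalkAbove a ω l ∧
    ∀ s ∈ Set.Icc x.1.2.2 (G.R x.1.1 x.1.2.1), a ≤ Γ.φ x.1.1 x.1.2.1 s ω)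

end MGGFF

/-- A potential (test function) on the metric graph of `G`: a continuously differentiable
function on each edge, consistent under orientation reversal of the edges. -/
structure WGraph.Potential (G : WGraph) where
  f : G.V → G.V → ℝ → ℝ
  symm : ∀ u v, G.Adj u v → ∀ s, f u v s = f v u (G.R u v - s)
  smooth : ∀ u v, G.Adj u v → ContDiff ℝ 1 (f u v)

/-- The Dirichlet energy of a potential on the metric graph. -/
def WGraph.Potential.energy {G : WGraph} (F : G.Potential) : ℝ :=
  (1 / 2) * ∑ u : G.V, ∑ v : G.V,
    if G.Adj u v then ∫ s in (0 : ℝ)..G.R u v, deriv (F.f u v) s ^ 2 else 0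

namespace MGGFF

variable {G : WGraph} {A : Finset G.V} {h : G.V → ℝ} {Ω : Type} [MeasurableSpace Ω]
  {P : Measure Ω} (Γ : MGGFF G A h P)

/-- The effective conductance (Dirichlet variational principle) between the first passage set
`Λ̃_a` started from `S` and the set of vertices `T`; it is `∞` when the two sets intersect. -/
def condFPS (a : ℝ) (S T : Finset G.V) (ω : Ω) : ENNReal :=
  sInf {E | ∃ F : G.Potential,
    (∀ x : G.MGPoint, Γ.InFPS a S x ω → F.f x.1.1 x.1.2.1 x.1.2.2 = 0) ∧
    (∀ v ∈ T, ∀ w, G.Adj v w → F.f v w 0 = 1) ∧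
    E = ENNReal.ofReal F.energy}

/-- The effective conductance between the first passage set `Λ̃_a` started from `S` and the
single vertex `x0`. -/
def condFPSVertex (a : ℝ) (S : Finset G.V) (x0 : G.V) (ω : Ω) : ENNReal :=
  sInf {E | ∃ F : G.Potential,
    (∀ x : G.MGPoint, Γ.InFPS a S x ω → F.f x.1.1 x.1.2.1 x.1.2.2 = 0) ∧
    (∀ w, G.Adj x0 w → F.f x0 w 0 = 1) ∧
    E = ENNReal.ofReal F.energy}

/-- The effective resistance between the vertex `x0` and the first passage set `Λ̃_a`. -/
def reffFPSVertex (a : ℝ) (S : Finset G.V) (x0 : G.V) (ω : Ω) : ℝ :=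
  ((Γ.condFPSVertex a S x0 ω)⁻¹).toReal

end MGGFF

/-- The network obtained from `G` by exploring, for each `i`, a portion of length `r i` of the
edge `eᵢ = (x i, y i)` adjacent to the boundary `A`, starting from `x i ∈ A`: the boundary and
the explored segments are removed, and each remaining partial edge becomes an edge of resistance
`R(eᵢ) - r i` joining a new vertex `zᵢ(r i)` (encoded by `Sum.inr i`) to `y i`. -/
def WGraph.explored (G : WGraph) (A : Finset G.V) {n : ℕ} (x y : Fin n → G.V)
    (r : Fin n → ℝ) : WGraph where
  V := {v : G.V // v ∉ A} ⊕ Fin n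
  fin := inferInstance
  deq := inferInstance
  C := fun p q =>
    match p, q with
    | Sum.inl u, Sum.inl v => G.C u.1 v.1
    | Sum.inl v, Sum.inr i => if v.1 = y i then max 0 (G.R (x i) (y i) - r i)⁻¹ else 0
    | Sum.inr i, Sum.inl v => if v.1 = y i then max 0 (G.R (x i) (y i) - r i)⁻¹ else 0
    | Sum.inr _, Sum.inr _ => 0
  symm := by rintro (u | i) (v | j) <;> simp [G.symm]
  nonneg := by
    rintro (u | i) (v | j) <;> simp [G.nonneg] <;> split <;> simp [le_max_left]
  loopless := by rintro (u | i) <;> simp [G.loopless]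

/-- `C^eff_{ij}(r₁, …, r_n)`: the effective conductance between the exploration points
`zᵢ(rᵢ)` and `z_j(r_j)` in the partially explored network. -/
def WGraph.CeffExplored (G : WGraph) (A : Finset G.V) {n : ℕ} (x y : Fin n → G.V)
    (r : Fin n → ℝ) (i j : Fin n) : ℝ :=
  (G.explored A x y r).Ceff (Finset.univ.image Sum.inr) (Sum.inr i) (Sum.inr j)

end

/-!
Let `cᵢ = (R(eᵢ) - rᵢ)⁻¹` be the conductance of the unexplored part `[zᵢ, yᵢ]` of `eᵢ` and `g` the
Green function of the explored network, whose interior vertices are those of `G` off `A`. Since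
`zᵢ` is joined only to `yᵢ`, `C^eff_{jk} = c_j c_k g(y_j, y_k)`. Moving `zᵢ` changes the interior
Laplacian only by `cᵢ` in its diagonal entry at `yᵢ`, and `∂cᵢ/∂rᵢ = cᵢ²`, so differentiating the
inverse gives `∂_{rᵢ} g(a, b) = -cᵢ² g(a, yᵢ) g(yᵢ, b)` and hence
`∂_{rᵢ} C^eff_{jk} = [j = i] cᵢ C^eff_{jk} + [k = i] cᵢ C^eff_{jk} - C^eff_{ij} C^eff_{ik}`.
Both formulas follow, the first because the rows of the effective conductance matrix sum to the
degrees, `∑_k C^eff_{ik} = cᵢ`. The Laplacian is invertible since it is positive definite: a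
function that is constant along the edges of `G` and vanishes on the boundary vanishes, because
`G` is connected and every edge leaving `A` is one of the `eᵢ`.
-/

open Finset Matrix

theorem Matrix.mul_single_one_mul_apply {m : Type*} [Fintype m] [DecidableEq m]
    (P Q : Matrix m m ℝ) (k a b : m) :
    (P * single k k (1 : ℝ) * Q : Matrix m m ℝ) a b = P a k * Q k b := by
  simp [Matrix.mul_apply, Matrix.single_apply, ite_and]

theorem hasDerivAt_max_zero_inv_sub {R s : ℝ} (hs : s < R) :
    HasDerivAt (fun t => max 0 (R - t)⁻¹) ((R - s)⁻¹ ^ 2) s := by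
  have hinv : HasDerivAt (fun t => (R - t)⁻¹) ((R - s)⁻¹ ^ 2) s := by
    have h := ((hasDerivAt_id s).const_sub R).inv (sub_pos.mpr hs).ne'
    rwa [neg_neg, one_div, ← inv_pow] at h
  refine hinv.congr_of_eventuallyEq ?_
  filter_upwards [Iio_mem_nhds hs] with t ht
  exact max_eq_right (inv_nonneg.mpr (sub_pos.mpr ht).le)

section

-- Any normed-ring structure on matrices serves: the statement below does not mention it.
attribute [local instance] Matrix.linftyOpNormedRing Matrix.linftyOpNormedAlgebra

theorem Matrix.hasDerivAt_inv_add_smul_apply {m : Type*} [Fintype m] [DecidableEq m]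
    (M N : Matrix m m ℝ) {f : ℝ → ℝ} {f' s : ℝ} (hf : HasDerivAt f f' s)
    (hs : IsUnit (M + f s • N)) (a b : m) :
    HasDerivAt (fun t => (M + f t • N)⁻¹ a b)
      (-f' * ((M + f s • N)⁻¹ * N * (M + f s • N)⁻¹) a b) s := by
  obtain ⟨u, hu⟩ := hs
  have hL : HasDerivAt (fun t => M + f t • N) (f' • N) s := (hf.smul_const N).const_add M
  have hinv := (hasFDerivAt_ringInverse u).comp_hasDerivAt_of_eq s hL hu
  have hentry :=
    (entryLinearMap ℝ ℝ a b).toContinuousLinearMap.hasFDerivAt.comp_hasDerivAt s hinv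
  refine (hentry.congr_deriv ?_).congr_of_eventuallyEq (.of_forall fun t => ?_)
  · simp only [_root_.neg_apply, ContinuousLinearMap.mulLeftRight_apply, Matrix.coe_units_inv,
      hu, Matrix.mul_smul, Matrix.smul_mul, neg_mul]
    rfl
  · simp [nonsing_inv_eq_ringInverse]

end

namespace WGraph

variable (G : WGraph)

theorem eq_of_isWalk {β : Type*} {f : G.V → β} (hf : ∀ u v, G.Adj u v → f u = f v)
    {u v : G.V} {l : List G.V} (hl : G.IsWalk u v l) : f u = f v := by
  obtain ⟨hchain, hhead, hlast⟩ := hl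
  replace hchain : l.IsChain G.Adj := hchain
  induction l generalizing u with
  | nil => simp at hhead
  | cons b t ih =>
    obtain rfl : b = u := by simpa using hhead
    cases t with
    | nil =>
      obtain rfl : b = v := by simpa using hlast
      rfl
    | cons w t =>
      rw [List.isChain_cons_cons] at hchain
      exact (hf _ _ hchain.1).trans (ih rfl (by simpa using hlast) hchain.2)

theorem Connected.eq_of_adj {G : WGraph} (hG : G.Connected) {β : Type*} {f : G.V → β}
    (hf : ∀ u v, G.Adj u v → f u = f v) (u v : G.V) : f u = f v :=
  G.eq_of_isWalk hf (hG u v).choose_spec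

theorem sum_add_sum_inter {M : Type*} [AddCommMonoid M] (B : Finset G.V) (f : G.V → M) :
    ∑ b ∈ B, f b + ∑ z : G.inter B, f z.1 = ∑ q, f q := by
  rw [← Finset.sum_add_sum_compl B f, Finset.sum_subtype Bᶜ (p := (· ∉ B)) (by simp) f]
  rfl

theorem two_mul_sum_C_mul_sub (f : G.V → ℝ) :
    2 * ∑ p, ∑ q, G.C p q * f p * (f p - f q) = ∑ p, ∑ q, G.C p q * (f p - f q) ^ 2 := by
  have hswap : ∑ p, ∑ q, G.C p q * f p * (f p - f q) =
      ∑ p, ∑ q, G.C p q * f q * (f q - f p) := by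
    rw [Finset.sum_comm]
    simp_rw [G.symm]
  rw [two_mul]
  nth_rewrite 2 [hswap]
  rw [← Finset.sum_add_distrib]
  refine Finset.sum_congr rfl fun p _ => ?_
  rw [← Finset.sum_add_distrib]
  exact Finset.sum_congr rfl fun q _ => by ring

variable (B : Finset G.V)

theorem lapMat_apply_eq (z w : G.inter B) :
    G.lapMat B z w = (if z = w then ∑ q, G.C z.1 q else 0) - G.C z.1 w.1 := by
  unfold lapMat
  split_ifs with h
  · subst h; rw [G.loopless, sub_zero]
  · rw [zero_sub]

theorem lapMat_transpose : (G.lapMat B)ᵀ = G.lapMat B := by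
  ext z w
  rw [transpose_apply, lapMat_apply_eq, lapMat_apply_eq, G.symm w.1 z.1]
  rcases eq_or_ne z w with rfl | h
  · rfl
  · rw [if_neg h, if_neg h.symm]

theorem green_symm (z w : G.inter B) : G.green B z w = G.green B w z := by
  rw [← transpose_apply (G.green B), green, transpose_nonsing_inv, lapMat_transpose]

theorem lapMat_mulVec_one : G.lapMat B *ᵥ 1 = fun z => ∑ b ∈ B, G.C z.1 b := by
  ext z
  simp only [mulVec, dotProduct, Pi.one_apply, mul_one, lapMat_apply_eq, Finset.sum_sub_distrib,
    Finset.sum_ite_eq, Finset.mem_univ, if_true]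
  rw [← G.sum_add_sum_inter B, add_sub_cancel_right]

theorem green_mulVec_sum_C (hB : IsUnit (G.lapMat B)) :
    G.green B *ᵥ (fun z => ∑ b ∈ B, G.C z.1 b) = 1 := by
  rw [← lapMat_mulVec_one, mulVec_mulVec, green,
    nonsing_inv_mul _ ((isUnit_iff_isUnit_det _).mp hB), one_mulVec]

theorem sum_Ceff (hB : IsUnit (G.lapMat B)) (a : G.V) :
    ∑ b ∈ B, G.Ceff B a b = ∑ q, G.C a q := by
  have hrow (z : G.inter B) : ∑ w, G.green B z w * ∑ b ∈ B, G.C w.1 b = 1 :=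
    congrFun (G.green_mulVec_sum_C B hB) z
  rw [← G.sum_add_sum_inter B]
  simp only [Ceff, Finset.sum_add_distrib]
  congr 1
  rw [Finset.sum_comm]
  refine Finset.sum_congr rfl fun z _ => ?_
  rw [Finset.sum_comm]
  simp only [mul_assoc, ← Finset.mul_sum, hrow, mul_one]

def extendZero (v : G.inter B → ℝ) (z : G.V) : ℝ := if h : z ∈ B then 0 else v ⟨z, h⟩

theorem dotProduct_lapMat_mulVec (v : G.inter B → ℝ) :
    2 * (v ⬝ᵥ (G.lapMat B *ᵥ v)) = ∑ p, ∑ q, G.C p q *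
      (G.extendZero B v p - G.extendZero B v q) ^ 2 := by
  set f := G.extendZero B v
  have hfB : ∀ b ∈ B, f b = 0 := fun b hb => dif_pos hb
  have hf (z : G.inter B) : f z.1 = v z := dif_neg z.2
  have hmulVec (z : G.inter B) : (G.lapMat B *ᵥ v) z = ∑ q, G.C z.1 q * (f z.1 - f q) := by
    have hCf : ∑ q, G.C z.1 q * f q = ∑ w : G.inter B, G.C z.1 w.1 * v w := by
      rw [← G.sum_add_sum_inter B,
        Finset.sum_eq_zero (s := B) fun b hb => by rw [hfB b hb, mul_zero], zero_add]
      simp only [hf]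
    simp only [mul_sub, Finset.sum_sub_distrib, ← Finset.sum_mul, hCf, hf, mulVec, dotProduct,
      lapMat_apply_eq, sub_mul, ite_mul, zero_mul, Finset.sum_ite_eq, Finset.mem_univ, if_true]
  rw [← G.two_mul_sum_C_mul_sub f, ← G.sum_add_sum_inter B, Finset.sum_eq_zero (s := B)
    (fun b hb => Finset.sum_eq_zero fun q _ => by rw [hfB b hb, mul_zero, zero_mul]), zero_add]
  congr 1
  simp only [dotProduct, hmulVec, Finset.mul_sum, hf]
  exact Finset.sum_congr rfl fun z _ => Finset.sum_congr rfl fun q _ => by ring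

-- `hB` says that every connected component of `G` meets `B`.
theorem lapMat_posDef (hB : ∀ f : G.V → ℝ, (∀ u v, G.Adj u v → f u = f v) →
    (∀ b ∈ B, f b = 0) → ∀ u, f u = 0) : (G.lapMat B).PosDef := by
  refine .of_dotProduct_mulVec_pos ?_ fun v hv => ?_
  · rw [IsHermitian, conjTranspose_eq_transpose_of_trivial, lapMat_transpose]
  rw [star_trivial]
  by_contra hle
  set f := G.extendZero B v
  have hterms (p q : G.V) : G.C p q * (f p - f q) ^ 2 = 0 := by
    have hnonneg (p q : G.V) : 0 ≤ G.C p q * (f p - f q) ^ 2 :=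
      mul_nonneg (G.nonneg p q) (sq_nonneg _)
    have hsum : ∑ p, ∑ q, G.C p q * (f p - f q) ^ 2 = 0 :=
      le_antisymm (by linarith [G.dotProduct_lapMat_mulVec B v])
        (Finset.sum_nonneg fun p _ => Finset.sum_nonneg fun q _ => hnonneg p q)
    rw [Fintype.sum_eq_zero_iff_of_nonneg fun p => Finset.sum_nonneg fun q _ => hnonneg p q]
      at hsum
    exact congrFun ((Fintype.sum_eq_zero_iff_of_nonneg (hnonneg p)).mp (congrFun hsum p)) q
  have hzero := hB f (fun u w huw => sub_eq_zero.mp (pow_eq_zero_iff two_ne_zero |>.mp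
    ((mul_eq_zero.mp (hterms u w)).resolve_left huw.ne'))) fun b hb => dif_pos hb
  exact hv (funext fun z => (dif_neg z.2).symm.trans (hzero z.1))

end WGraph

noncomputable section

namespace WGraph

variable (G : WGraph) (A : Finset G.V) {n : ℕ} (x y : Fin n → G.V)

def residualC (r : Fin n → ℝ) (i : Fin n) : ℝ := max 0 (G.R (x i) (y i) - r i)⁻¹

-- The boundary and interior of `G.explored A x y r`, written so as not to depend on `r`.
abbrev exploredBdry (n : ℕ) : Finset ({v : G.V // v ∉ A} ⊕ Fin n) := univ.image Sum.inr

abbrev ExploredInter (n : ℕ) := {p : {v : G.V // v ∉ A} ⊕ Fin n // p ∉ G.exploredBdry A n}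

def exploredLap (r : Fin n → ℝ) : Matrix (G.ExploredInter A n) (G.ExploredInter A n) ℝ :=
  (G.explored A x y r).lapMat (G.exploredBdry A n)

theorem exploredLap_apply (r : Fin n → ℝ) (z w : G.ExploredInter A n) :
    G.exploredLap A x y r z w =
      (if z = w then ∑ q, (G.explored A x y r).C z.1 q else 0) - (G.explored A x y r).C z.1 w.1 :=
  (G.explored A x y r).lapMat_apply_eq _ z w

variable {A y} in
def exploredY (hy : ∀ i, y i ∉ A) (i : Fin n) : G.ExploredInter A n :=
  ⟨.inl ⟨y i, hy i⟩, by simp⟩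

variable {A x y}

theorem residualC_pos {r : Fin n → ℝ} {i : Fin n} (hr : r i < G.R (x i) (y i)) :
    0 < G.residualC x y r i :=
  (inv_pos.mpr (sub_pos.mpr hr)).trans_le (le_max_right _ _)

theorem hasDerivAt_residualC_update {r : Fin n → ℝ} {i : Fin n} (hr : r i < G.R (x i) (y i))
    (j : Fin n) : HasDerivAt (fun t => G.residualC x y (Function.update r i t) j)
      (if j = i then G.residualC x y r i ^ 2 else 0) (r i) := by
  split_ifs with hji
  · subst hji
    simp only [residualC, Function.update_self]
    rw [max_eq_right (inv_nonneg.mpr (sub_pos.mpr hr).le)]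
    exact hasDerivAt_max_zero_inv_sub hr
  · simp only [residualC, Function.update_of_ne hji]
    exact hasDerivAt_const _ _

theorem explored_C_inter (r r' : Fin n → ℝ) (z w : G.ExploredInter A n) :
    (G.explored A x y r).C z.1 w.1 = (G.explored A x y r').C z.1 w.1 := by
  obtain ⟨u | k, hz⟩ := z
  · obtain ⟨v | l, hw⟩ := w
    · rfl
    · simp at hw
  · simp at hz

theorem exploredLap_inv_symm (r : Fin n → ℝ) (a b : G.ExploredInter A n) :
    (G.exploredLap A x y r)⁻¹ a b = (G.exploredLap A x y r)⁻¹ b a :=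
  (G.explored A x y r).green_symm _ a b

variable (hy : ∀ i, y i ∉ A)
include hy

theorem explored_C_inr (r : Fin n → ℝ) (i : Fin n) (z : G.ExploredInter A n) :
    (G.explored A x y r).C (.inr i) z.1 =
      if z = G.exploredY hy i then G.residualC x y r i else 0 := by
  obtain ⟨u | k, hz⟩ := z
  · simp [explored, exploredY, residualC, eq_comm (a := u.1), Subtype.ext_iff]
  · simp at hz

theorem CeffExplored_eq (r : Fin n → ℝ) (i j : Fin n) :
    G.CeffExplored A x y r i j = G.residualC x y r i * G.residualC x y r j *
      (G.exploredLap A x y r)⁻¹ (G.exploredY hy i) (G.exploredY hy j) := by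
  have hC (z : G.ExploredInter A n) (j : Fin n) : (G.explored A x y r).C z.1 (.inr j) =
      if z = G.exploredY hy j then G.residualC x y r j else 0 :=
    ((G.explored A x y r).symm _ _).trans (G.explored_C_inr hy r j z)
  show (G.explored A x y r).C (.inr i) (.inr j) + ∑ z : G.ExploredInter A n,
    ∑ w : G.ExploredInter A n, _ * _ * _ = _
  have h0 : (G.explored A x y r).C (.inr i) (.inr j) = 0 := rfl
  simp only [h0, explored_C_inr G hy, hC, ite_mul, mul_ite, zero_mul, mul_zero, zero_add,
    Finset.sum_ite_eq', Finset.mem_univ, if_true]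
  rw [mul_right_comm]
  rfl

theorem sum_explored_C_inr (r : Fin n → ℝ) (i : Fin n) :
    ∑ q, (G.explored A x y r).C (.inr i) q = G.residualC x y r i := by
  have hB : ∀ b ∈ (univ.image .inr : Finset (G.explored A x y r).V),
      (G.explored A x y r).C (.inr i) b = 0 := by
    intro b hb
    obtain ⟨k, -, rfl⟩ := Finset.mem_image.mp hb
    rfl
  have hI : ∑ z : G.ExploredInter A n, (G.explored A x y r).C (.inr i) z.1 =
      G.residualC x y r i := by
    simp only [explored_C_inr G hy]
    simp
  rw [← (G.explored A x y r).sum_add_sum_inter (univ.image .inr), Finset.sum_eq_zero hB,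
    zero_add]
  exact hI

theorem sum_CeffExplored (r : Fin n → ℝ) (hL : IsUnit (G.exploredLap A x y r)) (i : Fin n) :
    ∑ j, G.CeffExplored A x y r i j = G.residualC x y r i := by
  calc ∑ j, G.CeffExplored A x y r i j
      = ∑ b ∈ (univ.image .inr : Finset (G.explored A x y r).V),
          (G.explored A x y r).Ceff (univ.image .inr) (.inr i) b :=
        (Finset.sum_image fun _ _ _ _ h => Sum.inr_injective h).symm
    _ = ∑ q, (G.explored A x y r).C (.inr i) q :=
        (G.explored A x y r).sum_Ceff (univ.image .inr) hL (.inr i)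
    _ = G.residualC x y r i := G.sum_explored_C_inr hy r i

theorem sum_explored_C (r : Fin n → ℝ) (z : G.ExploredInter A n) :
    ∑ q, (G.explored A x y r).C z.1 q =
      ∑ w : G.ExploredInter A n, (G.explored A x y r).C z.1 w.1 +
        ∑ k, if z = G.exploredY hy k then G.residualC x y r k else 0 := by
  rw [← (G.explored A x y r).sum_add_sum_inter (univ.image .inr), add_comm]
  congr 1
  calc _ = ∑ k, (G.explored A x y r).C z.1 (.inr k) :=
        Finset.sum_image fun _ _ _ _ h => Sum.inr_injective h
    _ = _ := Finset.sum_congr rfl fun k _ =>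
        ((G.explored A x y r).symm _ _).trans (G.explored_C_inr hy r k z)

theorem exploredLap_update (r : Fin n → ℝ) (i : Fin n) (t : ℝ) :
    G.exploredLap A x y (Function.update r i t) = G.exploredLap A x y r +
      (G.residualC x y (Function.update r i t) i - G.residualC x y r i) •
        single (G.exploredY hy i) (G.exploredY hy i) 1 := by
  ext z w
  set Δ := G.residualC x y (Function.update r i t) i - G.residualC x y r i
  have hterm (k : Fin n) : (if z = G.exploredY hy k then G.residualC x y (Function.update r i t) k
      else 0) = (if z = G.exploredY hy k then G.residualC x y r k else 0) +
        if k = i then (if z = G.exploredY hy i then Δ else 0) else 0 := by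
    rcases eq_or_ne k i with rfl | hk
    · split_ifs <;> simp_all [Δ]
    · simp [residualC, hk]
  rw [Matrix.add_apply, Matrix.smul_apply, single_apply, smul_eq_mul, exploredLap_apply,
    exploredLap_apply, sum_explored_C G hy, sum_explored_C G hy,
    Finset.sum_congr rfl fun k _ => hterm k, Finset.sum_add_distrib, Finset.sum_ite_eq',
    if_pos (mem_univ i), G.explored_C_inter (Function.update r i t) r,
    Finset.sum_congr rfl fun w _ => G.explored_C_inter (Function.update r i t) r z w]
  rcases eq_or_ne z w with rfl | hzw
  · simp only [and_self, eq_comm (a := G.exploredY hy i)]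
    split_ifs <;> ring
  · rw [if_neg hzw, if_neg hzw, if_neg fun h => hzw (h.1.symm.trans h.2)]
    ring

theorem exploredLap_posDef (hconn : G.Connected) (hA : A.Nonempty)
    (hall : ∀ u ∈ A, ∀ v : G.V, G.Adj u v → ∃ i, x i = u ∧ y i = v) {r : Fin n → ℝ}
    (hr : ∀ i, r i < G.R (x i) (y i)) : (G.exploredLap A x y r).PosDef := by
  refine (G.explored A x y r).lapMat_posDef _ fun f hf hfB => ?_
  have hfY (j : Fin n) : f (.inl ⟨y j, hy j⟩) = 0 := by
    refine (hf _ (.inr j) ?_).trans (hfB _ (mem_image_of_mem _ (mem_univ j)))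
    show 0 < (if y j = y j then _ else _)
    rw [if_pos rfl]
    exact G.residualC_pos (hr j)
  let F : G.V → ℝ := fun u => if hu : u ∈ A then 0 else f (.inl ⟨u, hu⟩)
  have hF_bdry (u : G.V) (hu : u ∉ A) (w : G.V) (hw : w ∈ A) (hwu : G.Adj w u) : F u = 0 := by
    obtain ⟨j, -, rfl⟩ := hall w hw u hwu
    simpa [F, hu] using hfY j
  have hF (u w : G.V) (huw : G.Adj u w) : F u = F w := by
    by_cases hu : u ∈ A <;> by_cases hw : w ∈ A
    · simp [F, hu, hw]
    · rw [hF_bdry w hw u hu huw]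
      simp [F, hu]
    · rw [hF_bdry u hu w hw (by rwa [Adj, G.symm])]
      simp [F, hw]
    · simp only [F, hu, hw, dite_false]
      exact hf _ _ huw
  obtain ⟨a, ha⟩ := hA
  rintro (u | j)
  · simpa [F, u.2, ha] using hconn.eq_of_adj hF u.1 a
  · exact hfB _ (mem_image_of_mem _ (mem_univ j))

theorem hasDerivAt_exploredLap_inv {r : Fin n → ℝ} (hL : IsUnit (G.exploredLap A x y r))
    {i : Fin n} (hri : r i < G.R (x i) (y i)) (a b : G.ExploredInter A n) :
    HasDerivAt (fun t => (G.exploredLap A x y (Function.update r i t))⁻¹ a b)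
      (-G.residualC x y r i ^ 2 * ((G.exploredLap A x y r)⁻¹ a (G.exploredY hy i) *
        (G.exploredLap A x y r)⁻¹ (G.exploredY hy i) b)) (r i) := by
  have hf := (G.hasDerivAt_residualC_update hri i).sub_const (G.residualC x y r i)
  rw [if_pos rfl] at hf
  have h := Matrix.hasDerivAt_inv_add_smul_apply (G.exploredLap A x y r)
    (single (G.exploredY hy i) (G.exploredY hy i) 1) hf (by simpa using hL) a b
  simp only [Function.update_eq_self, sub_self, zero_smul, add_zero,
    Matrix.mul_single_one_mul_apply] at h
  exact h.congr_of_eventuallyEq (.of_forall fun t =>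
    congrArg (fun M : Matrix _ _ ℝ => M⁻¹ a b) (G.exploredLap_update hy r i t))

theorem hasDerivAt_CeffExplored {r : Fin n → ℝ} (hL : IsUnit (G.exploredLap A x y r)) {i : Fin n}
    (hri : r i < G.R (x i) (y i)) (j k : Fin n) :
    HasDerivAt (fun t => G.CeffExplored A x y (Function.update r i t) j k)
      ((if j = i then G.residualC x y r i * G.CeffExplored A x y r j k else 0) +
        (if k = i then G.residualC x y r i * G.CeffExplored A x y r j k else 0) -
          G.CeffExplored A x y r i j * G.CeffExplored A x y r i k) (r i) := by
  have h := ((G.hasDerivAt_residualC_update hri j).mul (G.hasDerivAt_residualC_update hri k)).mul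
    (G.hasDerivAt_exploredLap_inv hy hL hri (G.exploredY hy j) (G.exploredY hy k))
  simp only [Pi.mul_apply, Function.update_eq_self] at h
  refine (h.congr_of_eventuallyEq (.of_forall fun t => G.CeffExplored_eq hy _ j k)).congr_deriv ?_
  simp only [G.CeffExplored_eq hy r, G.exploredLap_inv_symm r (G.exploredY hy j)]
  split_ifs <;> subst_vars <;> ring

end WGraph

end

theorem stmt12_general (G : WGraph) (hconn : G.Connected) (A : Finset G.V) {n : ℕ}
    (x y : Fin n → G.V) (hx : ∀ i, x i ∈ A) (hy : ∀ i, y i ∉ A)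
    (hall : ∀ u ∈ A, ∀ v : G.V, G.Adj u v → ∃ i, x i = u ∧ y i = v)
    (r : Fin n → ℝ) (hr : ∀ i, r i ∈ Set.Ioo 0 (G.R (x i) (y i))) :
    (∀ i j : Fin n, j ≠ i →
      HasDerivAt (fun t => G.CeffExplored A x y (Function.update r i t) i j)
        (G.CeffExplored A x y r i j *
          ∑ j' ∈ Finset.univ.erase i, G.CeffExplored A x y r i j') (r i)) ∧
    (∀ i j j' : Fin n, i ≠ j → i ≠ j' → j ≠ j' →
      HasDerivAt (fun t => G.CeffExplored A x y (Function.update r i t) j j')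
        (-(G.CeffExplored A x y r i j * G.CeffExplored A x y r i j')) (r i)) := by
  have hr' (i : Fin n) : r i < G.R (x i) (y i) := (hr i).2
  have hL (i : Fin n) : IsUnit (G.exploredLap A x y r) :=
    (G.exploredLap_posDef hy hconn ⟨x i, hx i⟩ hall hr').isUnit
  refine ⟨fun i j hji => ?_, fun i j j' hij hij' _ => ?_⟩
  · convert G.hasDerivAt_CeffExplored hy (hL i) (hr' i) i j using 1
    rw [if_pos rfl, if_neg hji, Finset.sum_erase_eq_sub (mem_univ i),
      G.sum_CeffExplored hy r (hL i)]
    ring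
  · convert G.hasDerivAt_CeffExplored hy (hL i) (hr' i) j j' using 1
    rw [if_neg hij.symm, if_neg hij'.symm]
    ring

/-- Hadamard-type variational formulas for the effective conductances of the
partially explored network: `∂_{rᵢ} C^eff_{ij} = C^eff_{ij} ∑_{j' ≠ i} C^eff_{ij'}` and, for
`i ∉ {j, j'}`, `∂_{rᵢ} C^eff_{jj'} = -C^eff_{ij} C^eff_{ij'}`. -/
theorem stmt12 (G : WGraph) (hconn : G.Connected) (A : Finset G.V) {n : ℕ}
    (x y : Fin n → G.V) (hx : ∀ i, x i ∈ A) (hy : ∀ i, y i ∉ A)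
    (hadj : ∀ i, G.Adj (x i) (y i))
    (hdistinct : Function.Injective fun i => (x i, y i))
    (hnoAA : ∀ u ∈ A, ∀ v ∈ A, G.C u v = 0)
    (hall : ∀ u ∈ A, ∀ v : G.V, G.Adj u v → ∃ i, x i = u ∧ y i = v)
    (r : Fin n → ℝ) (hr : ∀ i, r i ∈ Set.Ioo 0 (G.R (x i) (y i))) :
    (∀ i j : Fin n, j ≠ i →
      HasDerivAt (fun t => G.CeffExplored A x y (Function.update r i t) i j)
        (G.CeffExplored A x y r i j *
          ∑ j' ∈ Finset.univ.erase i, G.CeffExplored A x y r i j') (r i)) ∧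
    (∀ i j j' : Fin n, i ≠ j → i ≠ j' → j ≠ j' →
      HasDerivAt (fun t => G.CeffExplored A x y (Function.update r i t) j j')
        (-(G.CeffExplored A x y r i j * G.CeffExplored A x y r i j')) (r i)) :=
  stmt12_general G hconn A x y hx hy hall r hr
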